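/- arXiv:1402.6645 — 2 statements merged into one kernel-verified Lean document; each statement's English description precedes it below -/
import Mathlib

section
/- Let X be a prestreak such that for all x, y ∈ X with x < y there exist rationals q, r, s, t with q < x < r < s < y < t (comparisons of elements of X with rationals). Then X is archimedean. -/
/-- A prestreak: a strict order (asymmetric and cotransitive) together with a
commutative additive monoid structure and a commutative multiplicative monoid
structure on the positive part, compatible with the order.  (The intrinsic
topology conditions of the paper are omitted, being vacuous in the classical
set-theoretic setting.) -/
structure Prestreak (X : Type*) where
  lt : X → X → Prop
  add : X → X → X
  zero : X
  mul : X → X → X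
  one : X
  lt_asymm : ∀ a b, ¬ (lt a b ∧ lt b a)
  lt_cotrans : ∀ a b x, lt a b → lt a x ∨ lt x b
  add_comm : ∀ a b, add a b = add b a
  add_assoc : ∀ a b c, add (add a b) c = add a (add b c)
  add_zero : ∀ a, add a zero = a
  zero_lt_one : lt zero one
  mul_pos : ∀ a b, lt zero a → lt zero b → lt zero (mul a b)
  mul_comm : ∀ a b, lt zero a → lt zero b → mul a b = mul b a
  mul_assoc : ∀ a b c, lt zero a → lt zero b → lt zero c →
    mul (mul a b) c = mul a (mul b c)
  mul_one : ∀ a, lt zero a → mul a one = a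
  mul_add : ∀ a b c, lt zero a → lt zero b → lt zero c →
    mul (add a b) c = add (mul a c) (mul b c)
  add_lt_add_iff : ∀ a b x, (lt (add a x) (add b x) ↔ lt a b)
  mul_lt_mul_iff : ∀ a b x, lt zero a → lt zero b → lt zero x →
    (lt (mul a x) (mul b x) ↔ lt a b)

namespace Prestreak

variable {X : Type*}

/-- Multiplication by a natural number: `0·a = 0`, `(n+1)·a = n·a + a`. -/
def nsmul (P : Prestreak X) : ℕ → X → X
  | 0, _ => P.zero
  | n + 1, a => P.add (nsmul P n a) a

/-- The canonical image of a natural number, `n ↦ n·1`. -/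
def ofNat (P : Prestreak X) (n : ℕ) : X := P.nsmul n P.one

/-- Comparison `x < q` of an element of a prestreak with a rational number,
using the canonical representation `q = (q.num⁺ − q.num⁻)/q.den`:
`x < (a−b)/c  :=  c·x + b < a`. -/
def ltQ (P : Prestreak X) (x : X) (q : ℚ) : Prop :=
  P.lt (P.add (P.nsmul q.den x) (P.ofNat ((-q.num).toNat))) (P.ofNat q.num.toNat)

/-- Comparison `q < x` of a rational with an element of a prestreak:
`(a−b)/c < x  :=  a < c·x + b`. -/
def qLt (P : Prestreak X) (q : ℚ) (x : X) : Prop :=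
  P.lt (P.ofNat q.num.toNat) (P.add (P.nsmul q.den x) (P.ofNat ((-q.num).toNat)))

/-- The archimedean property for prestreaks. -/
def Archimedean (P : Prestreak X) : Prop :=
  ∀ a b c d : X, P.lt b d →
    ∃ n : ℕ, P.lt (P.add a (P.nsmul n b)) (P.add c (P.nsmul n d))

/-- Tightness: antisymmetry of `≤` (where `a ≤ b := ¬ b < a`).
A streak is a tight archimedean prestreak. -/
def Tight (P : Prestreak X) : Prop :=
  ∀ a b : X, ¬ P.lt a b → ¬ P.lt b a → a = b

/-- The apartness relation `a # b := a < b ∨ b < a`. -/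
def Apart (P : Prestreak X) (a b : X) : Prop := P.lt a b ∨ P.lt b a

/-- A morphism of prestreaks: preserves `<`, `+`, `0`, `1` and products of
positive elements. -/
def IsHom {Y : Type*} (P : Prestreak X) (Q : Prestreak Y) (f : X → Y) : Prop :=
  (∀ a b, P.lt a b → Q.lt (f a) (f b)) ∧
  (∀ a b, f (P.add a b) = Q.add (f a) (f b)) ∧
  f P.zero = Q.zero ∧ f P.one = Q.one ∧
  (∀ a b, P.lt P.zero a → P.lt P.zero b → f (P.mul a b) = Q.mul (f a) (f b))

/-- A multiplicative structure on a prestreak: a total multiplication which is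
commutative, associative, distributes over addition, has unit `1`, restricts to
the given multiplication on positive elements, and satisfies the multiplicity
condition. -/
def IsMultiplicative (P : Prestreak X) (tmul : X → X → X) : Prop :=
  (∀ a b, tmul a b = tmul b a) ∧
  (∀ a b c, tmul (tmul a b) c = tmul a (tmul b c)) ∧
  (∀ a b c, tmul (P.add a b) c = P.add (tmul a c) (tmul b c)) ∧
  (∀ a, tmul a P.one = a) ∧
  (∀ a b, P.lt P.zero a → P.lt P.zero b → tmul a b = P.mul a b) ∧
  (∀ a b c d, P.lt b a → P.lt d c →
    P.lt (P.add (tmul a d) (tmul b c)) (P.add (tmul a c) (tmul b d)))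

end Prestreak

/-! Both comparisons of an element with a rational are instances of one scheme: `x < (a - b)/c`
reads `R (c • x + b) a` with `R` either `<` or its flip, and both relations are invariant under
adding a constant and under scaling by a positive natural number.  This makes the comparison
independent of the representation of the rational and additive: `x < q` and `y < q'` give
`x + y < q + q'`.  Given `b < d`, separate them as `b < r < s < d` and bound `a < A`, `C < c`;
then `a + n • b < A + n r ≤ C + n s < c + n • d` as soon as `n (s - r) > A - C`. -/

theorem Rat.eq_toNat_sub_toNat_neg_div_den (q : ℚ) :
    q = ((q.num.toNat : ℚ) - ((-q.num).toNat : ℚ)) / q.den := by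
  have h : ((q.num.toNat : ℤ) : ℚ) - ((-q.num).toNat : ℤ) = q.num := by
    exact_mod_cast Int.toNat_sub_toNat_neg q.num
  push_cast at h
  rw [h, Rat.num_div_den]

theorem Nat.cross_eq_of_sub_div_eq {a b c a' b' c' : ℕ} (hc : 0 < c) (hc' : 0 < c')
    (h : ((a : ℚ) - b) / c = ((a' : ℚ) - b') / c') : a * c' + b' * c = a' * c + b * c' := by
  rw [div_eq_div_iff (by positivity) (by positivity)] at h
  exact_mod_cast (by linarith : (a * c' + b' * c : ℚ) = a' * c + b * c')

theorem Nat.cross_le_of_sub_div_le {a b c a' b' c' : ℕ} (hc : 0 < c) (hc' : 0 < c')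
    (h : ((a : ℚ) - b) / c ≤ ((a' : ℚ) - b') / c') : a * c' + b' * c ≤ a' * c + b * c' := by
  rw [div_le_div_iff₀ (by positivity) (by positivity)] at h
  exact_mod_cast (by linarith : (a * c' + b' * c : ℚ) ≤ a' * c + b * c')

namespace Prestreak

variable {X : Type*} (P : Prestreak X)

abbrev toAddCommMonoid : AddCommMonoid X where
  add := P.add
  zero := P.zero
  add_assoc := P.add_assoc
  add_comm := P.add_comm
  add_zero := P.add_zero
  zero_add x := (P.add_comm _ x).trans (P.add_zero x)
  nsmul := P.nsmul
  nsmul_zero _ := rfl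
  nsmul_succ _ _ := rfl

theorem add_eq_add (x y : X) : P.add x y = (letI := P.toAddCommMonoid; x + y) := rfl

theorem nsmul_eq_smul (n : ℕ) (x : X) : P.nsmul n x = (letI := P.toAddCommMonoid; n • x) := rfl

theorem ofNat_eq_smul (n : ℕ) : P.ofNat n = (letI := P.toAddCommMonoid; n • P.one) := rfl

theorem ofNat_add (m n : ℕ) : P.ofNat (m + n) = P.add (P.ofNat m) (P.ofNat n) := by
  let := P.toAddCommMonoid
  simp only [ofNat_eq_smul, add_eq_add]
  exact add_nsmul P.one m n

theorem lt_trans {x y z : X} (hxy : P.lt x y) (hyz : P.lt y z) : P.lt x z :=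
  (P.lt_cotrans x y z hxy).resolve_right fun hzy => P.lt_asymm y z ⟨hyz, hzy⟩

theorem lt_of_lt_of_not_lt {x y z : X} (hxy : P.lt x y) (hzy : ¬ P.lt z y) : P.lt x z :=
  (P.lt_cotrans x y z hxy).resolve_right hzy

theorem lt_add_one (x : X) : P.lt x (P.add x P.one) := by
  have h := (P.add_lt_add_iff P.zero P.one x).2 P.zero_lt_one
  rwa [P.add_comm P.zero, P.add_zero, P.add_comm P.one] at h

theorem add_lt_add {x y u v : X} (hxy : P.lt x y) (huv : P.lt u v) :
    P.lt (P.add x u) (P.add y v) := by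
  have h := (P.add_lt_add_iff u v y).2 huv
  rw [P.add_comm u, P.add_comm v] at h
  exact P.lt_trans ((P.add_lt_add_iff x y u).2 hxy) h

theorem nsmul_lt_nsmul {k : ℕ} (hk : 0 < k) {x y : X} (h : P.lt x y) :
    P.lt (P.nsmul k x) (P.nsmul k y) := by
  induction k with
  | zero => exact absurd hk (Nat.lt_irrefl 0)
  | succ k ih =>
    rcases k.eq_zero_or_pos with rfl | hk
    · simpa [nsmul, P.add_comm P.zero, P.add_zero] using h
    · exact P.add_lt_add (ih hk) h

theorem lt_of_nsmul_lt_nsmul {k : ℕ} {x y : X} (h : P.lt (P.nsmul k x) (P.nsmul k y)) :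
    P.lt x y := by
  induction k with
  | zero => exact absurd ⟨h, h⟩ (P.lt_asymm _ _)
  | succ k ih =>
    rcases P.lt_cotrans _ _ (P.add (P.nsmul k x) y) h with h | h
    · rw [nsmul, P.add_comm _ x, P.add_comm _ y] at h
      exact (P.add_lt_add_iff x y _).1 h
    · exact ih ((P.add_lt_add_iff _ _ y).1 h)

theorem nsmul_add_lt_nsmul_add_iff {k : ℕ} (hk : 0 < k) (u v t : X) :
    P.lt (P.add (P.nsmul k u) t) (P.add (P.nsmul k v) t) ↔ P.lt u v :=
  (P.add_lt_add_iff _ _ t).trans ⟨P.lt_of_nsmul_lt_nsmul, P.nsmul_lt_nsmul hk⟩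

theorem not_ofNat_lt_zero (n : ℕ) : ¬ P.lt (P.ofNat n) P.zero := by
  induction n with
  | zero => exact fun h => P.lt_asymm _ _ ⟨h, h⟩
  | succ n ih => exact fun h => ih (P.lt_trans (P.lt_add_one _) h)

theorem not_ofNat_lt_ofNat {m n : ℕ} (h : m ≤ n) : ¬ P.lt (P.ofNat n) (P.ofNat m) := by
  obtain ⟨k, rfl⟩ := Nat.exists_eq_add_of_le h
  rw [P.ofNat_add, P.add_comm (P.ofNat m)]
  intro hlt
  refine P.not_ofNat_lt_zero k ((P.add_lt_add_iff _ _ (P.ofNat m)).1 ?_)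
  rwa [P.add_comm P.zero, P.add_zero]

theorem lt_of_affine_lt_of_lt_affine {x y : X} {a b a' b' c : ℕ}
    (hx : P.lt (P.add (P.nsmul c x) (P.ofNat b)) (P.ofNat a))
    (hy : P.lt (P.ofNat a') (P.add (P.nsmul c y) (P.ofNat b'))) (h : a + b' ≤ a' + b) :
    P.lt x y := by
  refine P.lt_of_nsmul_lt_nsmul (k := c) ((P.add_lt_add_iff _ _ (P.ofNat (b + b'))).1 ?_)
  have h₁ := (P.add_lt_add_iff _ _ (P.ofNat b')).2 hx
  have h₂ := (P.add_lt_add_iff _ _ (P.ofNat b)).2 hy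
  rw [P.add_assoc, ← P.ofNat_add, ← P.ofNat_add] at h₁
  rw [P.add_assoc, ← P.ofNat_add, ← P.ofNat_add, Nat.add_comm b'] at h₂
  exact P.lt_trans (P.lt_of_lt_of_not_lt h₁ (P.not_ofNat_lt_ofNat h)) h₂

structure IsAddCompatible (R : X → X → Prop) : Prop where
  add : ∀ {u v u' v' : X}, R u v → R u' v' → R (P.add u u') (P.add v v')
  nsmul_add_iff : ∀ {k : ℕ}, 0 < k → ∀ u v t : X,
    R (P.add (P.nsmul k u) t) (P.add (P.nsmul k v) t) ↔ R u v

theorem isAddCompatible_lt : P.IsAddCompatible P.lt :=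
  ⟨P.add_lt_add, P.nsmul_add_lt_nsmul_add_iff⟩

theorem isAddCompatible_flip_lt : P.IsAddCompatible (flip P.lt) :=
  ⟨fun h h' => P.add_lt_add h h', fun hk u v t => P.nsmul_add_lt_nsmul_add_iff hk v u t⟩

/-- `P.ltQ x q` is `P.RelQ P.lt x q`, and `P.qLt q x` is `P.RelQ (flip P.lt) x q`. -/
def RelQ (R : X → X → Prop) (x : X) (q : ℚ) : Prop :=
  R (P.add (P.nsmul q.den x) (P.ofNat (-q.num).toNat)) (P.ofNat q.num.toNat)

section

variable {P} {R : X → X → Prop}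

theorem IsAddCompatible.nsmul (hR : P.IsAddCompatible R) {k : ℕ} (hk : 0 < k) {u v : X}
    (h : R u v) : R (P.nsmul k u) (P.nsmul k v) := by
  rwa [← hR.nsmul_add_iff hk _ _ P.zero, P.add_zero, P.add_zero] at h

theorem IsAddCompatible.affine_congr (hR : P.IsAddCompatible R) {x : X} {a b c a' b' c' : ℕ}
    (hc : 0 < c) (hc' : 0 < c') (h : a * c' + b' * c = a' * c + b * c') :
    R (P.add (P.nsmul c x) (P.ofNat b)) (P.ofNat a) ↔
      R (P.add (P.nsmul c' x) (P.ofNat b')) (P.ofNat a') := by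
  refine (hR.nsmul_add_iff hc' _ _ (P.ofNat (b' * c))).symm.trans
    (Iff.trans ?_ (hR.nsmul_add_iff hc _ _ (P.ofNat (b * c'))))
  let := P.toAddCommMonoid
  simp only [add_eq_add, nsmul_eq_smul, ofNat_eq_smul]
  have e₁ : c' • (c • x + b • P.one) + (b' * c) • P.one =
      c • (c' • x + b' • P.one) + (b * c') • P.one := by module
  have e₂ : c' • a • P.one + (b' * c) • P.one = c • a' • P.one + (b * c') • P.one := by
    simp only [smul_smul, ← add_nsmul]
    congr 1
    linarith
  rw [e₁, e₂]

theorem IsAddCompatible.affine_add (hR : P.IsAddCompatible R) {x y : X} {a b c a' b' c' : ℕ}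
    (hc : 0 < c) (hc' : 0 < c') (hx : R (P.add (P.nsmul c x) (P.ofNat b)) (P.ofNat a))
    (hy : R (P.add (P.nsmul c' y) (P.ofNat b')) (P.ofNat a')) :
    R (P.add (P.nsmul (c * c') (P.add x y)) (P.ofNat (b * c' + b' * c)))
      (P.ofNat (a * c' + a' * c)) := by
  have h := hR.add (hR.nsmul hc' hx) (hR.nsmul hc hy)
  let := P.toAddCommMonoid
  simp only [add_eq_add, nsmul_eq_smul, ofNat_eq_smul] at h ⊢
  convert h using 1 <;> module

theorem IsAddCompatible.relQ_iff (hR : P.IsAddCompatible R) {x : X} {q : ℚ} {a b c : ℕ}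
    (hc : 0 < c) (hq : q = ((a : ℚ) - b) / c) :
    P.RelQ R x q ↔ R (P.add (P.nsmul c x) (P.ofNat b)) (P.ofNat a) :=
  hR.affine_congr q.den_pos hc
    (Nat.cross_eq_of_sub_div_eq q.den_pos hc (q.eq_toNat_sub_toNat_neg_div_den.symm.trans hq))

theorem IsAddCompatible.relQ_add (hR : P.IsAddCompatible R) {x y : X} {q q' : ℚ}
    (hx : P.RelQ R x q) (hy : P.RelQ R y q') : P.RelQ R (P.add x y) (q + q') := by
  refine (hR.relQ_iff (Nat.mul_pos q.den_pos q'.den_pos) ?_).2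
    (hR.affine_add q.den_pos q'.den_pos hx hy)
  conv_lhs => rw [q.eq_toNat_sub_toNat_neg_div_den, q'.eq_toNat_sub_toNat_neg_div_den]
  push_cast
  field_simp
  ring

theorem IsAddCompatible.relQ_add_nsmul (hR : P.IsAddCompatible R) {x y : X} {q q' : ℚ}
    (hx : P.RelQ R x q) (hy : P.RelQ R y q') (n : ℕ) :
    P.RelQ R (P.add x (P.nsmul n y)) (q + n * q') := by
  induction n with
  | zero =>
    show P.RelQ R (P.add x P.zero) (q + (0 : ℕ) * q')
    rwa [P.add_zero, Nat.cast_zero, zero_mul, _root_.add_zero]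
  | succ n ih =>
    show P.RelQ R (P.add x (P.add (P.nsmul n y) y)) (q + (n + 1 : ℕ) * q')
    rw [← P.add_assoc, Nat.cast_succ, add_one_mul, ← _root_.add_assoc]
    exact hR.relQ_add ih hy

end

theorem lt_of_ltQ_of_qLt {x y : X} {q q' : ℚ} (hx : P.ltQ x q) (hy : P.qLt q' y)
    (h : q ≤ q') : P.lt x y := by
  have hq := q.eq_toNat_sub_toNat_neg_div_den
  have hq' := q'.eq_toNat_sub_toNat_neg_div_den
  have hc : 0 < q.den * q'.den := Nat.mul_pos q.den_pos q'.den_pos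
  refine P.lt_of_affine_lt_of_lt_affine
    ((P.isAddCompatible_lt.relQ_iff hc (a := q.num.toNat * q'.den)
      (b := (-q.num).toNat * q'.den) ?_).1 hx)
    ((P.isAddCompatible_flip_lt.relQ_iff hc (a := q'.num.toNat * q.den)
      (b := (-q'.num).toNat * q.den) ?_).1 hy)
    (Nat.cross_le_of_sub_div_le q.den_pos q'.den_pos (hq ▸ hq' ▸ h))
  · conv_lhs => rw [hq]
    push_cast
    field_simp
  · conv_lhs => rw [hq']
    push_cast
    field_simp

end Prestreak

/-- A prestreak in which any two elements `x < y` can be separated (and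
bounded) by rationals `q < x < r < s < y < t` is archimedean. -/
theorem archimedean_of_rational_separation {X : Type*} (P : Prestreak X)
    (h : ∀ x y : X, P.lt x y → ∃ q r s t : ℚ,
      P.qLt q x ∧ P.ltQ x r ∧ r < s ∧ P.qLt s y ∧ P.ltQ y t) :
    P.Archimedean := by
  intro a b c d hbd
  obtain ⟨-, r, s, -, -, hbr, hrs, hsd, -⟩ := h b d hbd
  obtain ⟨-, A, -, -, -, haA, -, -, -⟩ := h a _ (P.lt_add_one a)
  obtain ⟨C, -, -, -, hCc, -, -, -, -⟩ := h c _ (P.lt_add_one c)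
  obtain ⟨n, hn⟩ := exists_nat_gt ((A - C) / (s - r))
  refine ⟨n, P.lt_of_ltQ_of_qLt (P.isAddCompatible_lt.relQ_add_nsmul haA hbr n)
    (P.isAddCompatible_flip_lt.relQ_add_nsmul hCc hsd n) ?_⟩
  rw [div_lt_iff₀ (sub_pos.2 hrs)] at hn
  linarith
end

section
/- Let X be a multiplicative archimedean prestreak and a, b, x ∈ X. If x > 0 then a < b ⟺ a·x < b·x, and if x < 0 then a < b ⟺ b·x < a·x. -/
/-! Multiplication by `x > 0` is strictly monotone because the multiplicity condition
applied to `a < b` and `0 < x` gives `b·0 + a·x < b·x + a·0`, and the terms `a·0`, `b·0`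
are additively idempotent, so they cancel. For the converse, if `a·x < b·x` the
archimedean property yields `n` with `x + n·(a·x) < n·(b·x)`, i.e. `(1 + n·a)·x < (n·b)·x`.
By cotransitivity `n·a < n·b` (whence `a < b`) or `n·b < 1 + n·a`; the latter would give
`(n·b)·x < (1 + n·a)·x` by monotonicity. Negative `x` is handled by the mirror argument. -/

namespace Prestreak

variable {X : Type*} (P : Prestreak X)

theorem lt_irrefl (a : X) : ¬ P.lt a a :=
  fun h => P.lt_asymm a a ⟨h, h⟩

theorem not_lt_of_lt {a b : X} (h : P.lt a b) : ¬ P.lt b a :=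
  fun h' => P.lt_asymm a b ⟨h, h'⟩

theorem zero_add (a : X) : P.add P.zero a = a := by
  rw [P.add_comm, P.add_zero]

theorem add_lt_add_iff_left (w a b : X) : P.lt (P.add w a) (P.add w b) ↔ P.lt a b := by
  rw [P.add_comm w a, P.add_comm w b, P.add_lt_add_iff]

theorem lt_of_add_lt_add_of_add_eq {u v w A B : X} (hu : P.add u w = w) (hv : P.add v w = w)
    (h : P.lt (P.add A u) (P.add B v)) : P.lt A B := by
  rwa [← P.add_lt_add_iff _ _ w, P.add_assoc, hu, P.add_assoc, hv, P.add_lt_add_iff] at h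

theorem lt_of_nsmul_lt_nsmul_s15 {a b : X} (n : ℕ) (h : P.lt (P.nsmul n a) (P.nsmul n b)) :
    P.lt a b := by
  induction n with
  | zero => exact absurd h (P.lt_irrefl _)
  | succ n ih =>
    rcases P.lt_cotrans _ _ (P.add (P.nsmul n a) b) h with h | h
    · exact (P.add_lt_add_iff_left _ _ _).mp h
    · exact ih ((P.add_lt_add_iff _ _ _).mp h)

theorem lt_or_nsmul_lt_one_add_nsmul (n : ℕ) (a b : X) :
    P.lt a b ∨ P.lt (P.nsmul n b) (P.add P.one (P.nsmul n a)) := by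
  have hstep : P.lt (P.nsmul n a) (P.add P.one (P.nsmul n a)) := by
    simpa only [P.zero_add] using (P.add_lt_add_iff _ _ (P.nsmul n a)).mpr P.zero_lt_one
  exact (P.lt_cotrans _ _ (P.nsmul n b) hstep).imp_left (P.lt_of_nsmul_lt_nsmul_s15 n)

namespace IsMultiplicative

variable {P} {tmul : X → X → X}

-- `a·0` need not be `0`: only its idempotence follows from distributivity.
theorem mul_zero_add_self (hM : P.IsMultiplicative tmul) (a : X) :
    P.add (tmul a P.zero) (tmul a P.zero) = tmul a P.zero := by
  obtain ⟨hcomm, -, hadd_mul, -⟩ := hM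
  rw [hcomm a, ← hadd_mul, P.add_zero]

theorem lt_of_add_mul_zero_lt_add_mul_zero (hM : P.IsMultiplicative tmul) {a b A B : X}
    (h : P.lt (P.add A (tmul b P.zero)) (P.add B (tmul a P.zero))) : P.lt A B := by
  refine P.lt_of_add_lt_add_of_add_eq (w := P.add (tmul a P.zero) (tmul b P.zero)) ?_ ?_ h
  · rw [P.add_comm (tmul a P.zero), ← P.add_assoc, hM.mul_zero_add_self]
  · rw [← P.add_assoc, hM.mul_zero_add_self]

theorem mul_lt_mul_of_pos_right (hM : P.IsMultiplicative tmul) {a b x : X}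
    (hx : P.lt P.zero x) (hab : P.lt a b) : P.lt (tmul a x) (tmul b x) := by
  have h : P.lt (P.add (tmul b P.zero) (tmul a x)) (P.add (tmul b x) (tmul a P.zero)) :=
    hM.2.2.2.2.2 b a x P.zero hab hx
  rw [P.add_comm (tmul b P.zero)] at h
  exact hM.lt_of_add_mul_zero_lt_add_mul_zero h

theorem mul_lt_mul_of_neg_right (hM : P.IsMultiplicative tmul) {a b x : X}
    (hx : P.lt x P.zero) (hab : P.lt a b) : P.lt (tmul b x) (tmul a x) := by
  have h : P.lt (P.add (tmul b x) (tmul a P.zero)) (P.add (tmul b P.zero) (tmul a x)) :=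
    hM.2.2.2.2.2 b a P.zero x hab hx
  rw [P.add_comm (tmul b P.zero)] at h
  exact hM.lt_of_add_mul_zero_lt_add_mul_zero h

theorem nsmul_mul (hM : P.IsMultiplicative tmul) (n : ℕ) (a x : X) :
    tmul (P.nsmul n a) x = P.add (tmul P.zero x) (P.nsmul n (tmul a x)) := by
  obtain ⟨-, -, hadd_mul, -⟩ := hM
  induction n with
  | zero => exact (P.add_zero _).symm
  | succ n ih =>
    show tmul (P.add (P.nsmul n a) a) x = P.add _ (P.add (P.nsmul n (tmul a x)) _)
    rw [hadd_mul, ih, P.add_assoc]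

theorem one_add_nsmul_mul (hM : P.IsMultiplicative tmul) (n : ℕ) (a x : X) :
    tmul (P.add P.one (P.nsmul n a)) x
      = P.add (tmul P.zero x) (P.add x (P.nsmul n (tmul a x))) := by
  have hnsmul := hM.nsmul_mul n a x
  obtain ⟨hcomm, -, hadd_mul, hmul_one, -⟩ := hM
  rw [hadd_mul, hcomm, hmul_one, hnsmul, ← P.add_assoc, P.add_comm x, P.add_assoc]

theorem lt_of_mul_lt_mul_of_pos_right (hM : P.IsMultiplicative tmul) (hA : P.Archimedean)
    {a b x : X} (hx : P.lt P.zero x)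
    (h : P.lt (tmul a x) (tmul b x)) : P.lt a b := by
  obtain ⟨n, hn⟩ := hA x (tmul a x) P.zero (tmul b x) h
  rw [P.zero_add] at hn
  have hlt : P.lt (tmul (P.add P.one (P.nsmul n a)) x) (tmul (P.nsmul n b) x) := by
    rwa [hM.one_add_nsmul_mul, hM.nsmul_mul, P.add_lt_add_iff_left]
  exact (P.lt_or_nsmul_lt_one_add_nsmul n a b).resolve_right
    fun hgt => P.not_lt_of_lt hlt (hM.mul_lt_mul_of_pos_right hx hgt)

theorem lt_of_mul_lt_mul_of_neg_right (hM : P.IsMultiplicative tmul) (hA : P.Archimedean)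
    {a b x : X} (hx : P.lt x P.zero)
    (h : P.lt (tmul b x) (tmul a x)) : P.lt a b := by
  obtain ⟨n, hn⟩ := hA P.zero (tmul b x) x (tmul a x) h
  rw [P.zero_add] at hn
  have hlt : P.lt (tmul (P.nsmul n b) x) (tmul (P.add P.one (P.nsmul n a)) x) := by
    rwa [hM.one_add_nsmul_mul, hM.nsmul_mul, P.add_lt_add_iff_left]
  exact (P.lt_or_nsmul_lt_one_add_nsmul n a b).resolve_right
    fun hgt => P.not_lt_of_lt hlt (hM.mul_lt_mul_of_neg_right hx hgt)

end IsMultiplicative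

end Prestreak

/-- In a multiplicative archimedean prestreak, multiplication by a positive
element preserves and reflects `<`, and multiplication by a negative element
reverses it. -/
theorem mul_lt_iff_of_sign {X : Type*} (P : Prestreak X)
    (tmul : X → X → X) (hM : P.IsMultiplicative tmul) (hA : P.Archimedean)
    (a b x : X) :
    (P.lt P.zero x → (P.lt a b ↔ P.lt (tmul a x) (tmul b x))) ∧
    (P.lt x P.zero → (P.lt a b ↔ P.lt (tmul b x) (tmul a x))) :=
  ⟨fun hx => ⟨hM.mul_lt_mul_of_pos_right hx, hM.lt_of_mul_lt_mul_of_pos_right hA hx⟩,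
    fun hx => ⟨hM.mul_lt_mul_of_neg_right hx, hM.lt_of_mul_lt_mul_of_neg_right hA hx⟩⟩
end
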